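/- Theorem 2 (Convergence of AIL): let π_{θ*} be a state-conditional policy and π̂ a belief-conditional policy such that ∑_{(s,b)∈S×B} d^{π̂}(s,b)·KL(π_{θ*}(·|s) ‖ π̂(·|b)) = 0 and J(π_{θ*}) ≥ J(κ) for every belief-conditional policy κ. Let (κ_k)_{k≥0} be any sequence of belief-conditional policies with κ_{k+1}(·|b) = π̂(·|b) for every b with d^{κ_k}(b) > 0, and let R = max_{x,a,x'} |r(x,a,x')|. Then for every k ≥ 0, |J(κ_k) − J(π̂)| ≤ 2R·γ^k/(1−γ); in particular J(κ_k) converges, as k → ∞, to the optimal partially observed return sup over belief-conditional policies κ of J(κ). -/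

import Mathlib

open scoped BigOperators ENNReal Classical

noncomputable section

/-- A probability mass function on a finite type. -/
def IsPmf {X : Type*} [Fintype X] (p : X → ℝ) : Prop :=
  (∀ x, 0 ≤ p x) ∧ ∑ x, p x = 1

/-- Kullback–Leibler divergence between two pmfs on a finite type, valued in `[0, ∞]`,
with the conventions `0 * log (0 / q a) = 0` and `KL(p‖q) = ∞` whenever
`p a > 0 = q a` for some `a`. -/
def klDiv {A : Type*} [Fintype A] (p q : A → ℝ) : ℝ≥0∞ :=
  if ∀ a, q a = 0 → p a = 0 then ENNReal.ofReal (∑ a, p a * Real.log (p a / q a)) else ⊤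

/-- Time-`t` marginal pmf of the Markov chain `(s_t, b_t)` induced by initial
distribution `μ₀`, transition kernel `T`, and a policy `pol` on state–belief pairs. -/
def traj {S B A : Type*} [Fintype S] [Fintype B] [Fintype A]
    (μ₀ : S × B → ℝ) (T : S × B → A → S × B → ℝ)
    (pol : S × B → A → ℝ) : ℕ → S × B → ℝ
  | 0 => μ₀
  | t + 1 => fun x' => ∑ x : S × B, ∑ a : A, traj μ₀ T pol t x * pol x a * T x a x'

/-- The pair policy induced by a belief-conditional policy. -/
def beliefPol {S B A : Type*} (κ : B → A → ℝ) : S × B → A → ℝ := fun x a => κ x.2 a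

/-- The pair policy induced by a state-conditional policy. -/
def statePol {S B A : Type*} (π : S → A → ℝ) : S × B → A → ℝ := fun x a => π x.1 a

/-- Discounted occupancy `d^pol(s,b) = (1-γ)·∑_t γ^t·q_pol(t)(s,b)`. -/
def occ {S B A : Type*} [Fintype S] [Fintype B] [Fintype A]
    (γ : ℝ) (μ₀ : S × B → ℝ) (T : S × B → A → S × B → ℝ)
    (pol : S × B → A → ℝ) (x : S × B) : ℝ :=
  (1 - γ) * ∑' t : ℕ, γ ^ t * traj μ₀ T pol t x

/-- Expected discounted return `J(pol) = ∑_t γ^t·E[r((s_t,b_t),a_t,(s_{t+1},b_{t+1}))]`. -/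
def ret {S B A : Type*} [Fintype S] [Fintype B] [Fintype A]
    (γ : ℝ) (μ₀ : S × B → ℝ) (T : S × B → A → S × B → ℝ)
    (pol : S × B → A → ℝ) (r : S × B → A → S × B → ℝ) : ℝ :=
  ∑' t : ℕ, γ ^ t * ∑ x : S × B, ∑ a : A, ∑ x' : S × B,
    traj μ₀ T pol t x * pol x a * T x a x' * r x a x'

/-!
Once `π̂` agrees with the current iterate on every pair it reaches before time `k`, the two
chains have the same marginals up to time `k`, so their returns differ only in the tail
`∑_{t ≥ k} γ^t`, which is at most `2Rγ^k/(1-γ)`. The AIL update propagates this agreement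
one step per iteration: a pair reached by `π̂` at time `t < k+1` is reached by `κ_k` as well,
hence has positive occupancy under `κ_k`, and there `κ_{k+1}` is set to `π̂`. Zero KL on the
support of `d^{π̂}` forces `π_{θ*} = π̂` on every reachable pair, so `J(π_{θ*}) = J(π̂)` and
optimality of `π_{θ*}` makes `J(π̂)` the supremum.
-/

open Filter Topology
open InformationTheory (klFun klFun_apply klFun_nonneg klFun_eq_zero_iff)

lemma IsPmf.le_one {X : Type*} [Fintype X] {p : X → ℝ} (hp : IsPmf p) (x : X) : p x ≤ 1 :=
  hp.2 ▸ Finset.single_le_sum (fun y _ => hp.1 y) (Finset.mem_univ x)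

lemma eq_of_klDiv_eq_zero {A : Type*} [Fintype A] {p q : A → ℝ}
    (hp : IsPmf p) (hq : IsPmf q) (h : klDiv p q = 0) : p = q := by
  unfold klDiv at h
  split_ifs at h with hac
  swap
  · exact absurd h ENNReal.top_ne_zero
  have hterm : ∀ a, p a * Real.log (p a / q a) = p a - q a + q a * klFun (p a / q a) := by
    intro a
    rcases (hq.1 a).eq_or_lt with hqa | hqa
    · simp [← hqa, hac a hqa.symm]
    · rw [klFun_apply, mul_sub, mul_add, ← mul_assoc, mul_div_cancel₀ _ hqa.ne']
      ring
  have hnn : ∀ a, 0 ≤ q a * klFun (p a / q a) := fun a =>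
    mul_nonneg (hq.1 a) (klFun_nonneg (div_nonneg (hp.1 a) (hq.1 a)))
  have hsum : ∑ a, q a * klFun (p a / q a) = 0 := by
    have hle := ENNReal.ofReal_eq_zero.mp h
    simp only [hterm, Finset.sum_add_distrib, Finset.sum_sub_distrib, hp.2, hq.2, sub_self,
      zero_add] at hle
    exact le_antisymm hle (Finset.sum_nonneg fun a _ => hnn a)
  funext a
  rcases mul_eq_zero.mp ((Finset.sum_eq_zero_iff_of_nonneg fun a _ => hnn a).mp hsum a
    (Finset.mem_univ a)) with hqa | hkl
  · rw [hqa, hac a hqa]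
  · have hratio := (klFun_eq_zero_iff (div_nonneg (hp.1 a) (hq.1 a))).mp hkl
    have hqa : q a ≠ 0 := fun h0 => by simp [h0] at hratio
    exact (div_eq_one_iff_eq hqa).mp hratio

lemma abs_le_iSup_iSup_iSup {X Y Z : Type*} [Finite X] [Finite Y] [Finite Z]
    (f : X → Y → Z → ℝ) (x : X) (y : Y) (z : Z) :
    |f x y z| ≤ ⨆ x, ⨆ y, ⨆ z, |f x y z| :=
  le_ciSup_of_le (Set.finite_range _).bddAbove x <|
    le_ciSup_of_le (Set.finite_range _).bddAbove y <|
      le_ciSup (f := fun z => |f x y z|) (Set.finite_range _).bddAbove z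

section DiscountedSums

variable {γ R : ℝ}

lemma summable_pow_mul_of_abs_le (hγ0 : 0 ≤ γ) (hγ1 : γ < 1) {f : ℕ → ℝ}
    (hf : ∀ t, |f t| ≤ R) : Summable fun t => γ ^ t * f t :=
  Summable.of_norm_bounded ((summable_geometric_of_lt_one hγ0 hγ1).mul_left R) fun t => by
    rw [Real.norm_eq_abs, abs_mul, abs_of_nonneg (pow_nonneg hγ0 t), mul_comm]
    exact mul_le_mul_of_nonneg_right (hf t) (pow_nonneg hγ0 t)

lemma abs_tsum_pow_mul_sub_le (hγ0 : 0 ≤ γ) (hγ1 : γ < 1) {f g : ℕ → ℝ}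
    (hf : ∀ t, |f t| ≤ R) (hg : ∀ t, |g t| ≤ R) {k : ℕ} (hfg : ∀ t < k, f t = g t) :
    |∑' t, γ ^ t * f t - ∑' t, γ ^ t * g t| ≤ 2 * R * γ ^ k / (1 - γ) := by
  have hfs := summable_pow_mul_of_abs_le hγ0 hγ1 hf
  have hgs := summable_pow_mul_of_abs_le hγ0 hγ1 hg
  have hhead : ∑ t ∈ Finset.range k, (γ ^ t * f t - γ ^ t * g t) = 0 :=
    Finset.sum_eq_zero fun t ht => by rw [hfg t (Finset.mem_range.mp ht), sub_self]
  rw [← hfs.tsum_sub hgs, ← (hfs.sub hgs).sum_add_tsum_nat_add k, hhead, zero_add,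
    ← Real.norm_eq_abs, div_eq_mul_inv]
  refine tsum_of_norm_bounded ((hasSum_geometric_of_lt_one hγ0 hγ1).mul_left _) fun t => ?_
  have hdiff : |f (t + k) - g (t + k)| ≤ 2 * R :=
    (abs_sub _ _).trans (by linarith [hf (t + k), hg (t + k)])
  calc ‖γ ^ (t + k) * f (t + k) - γ ^ (t + k) * g (t + k)‖
      = γ ^ (t + k) * |f (t + k) - g (t + k)| := by
        rw [Real.norm_eq_abs, ← mul_sub, abs_mul, abs_of_nonneg (pow_nonneg hγ0 _)]
    _ ≤ γ ^ (t + k) * (2 * R) := mul_le_mul_of_nonneg_left hdiff (pow_nonneg hγ0 _)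
    _ = 2 * R * γ ^ k * γ ^ t := by ring

lemma tendsto_of_abs_sub_le_mul_pow (hγ0 : 0 ≤ γ) (hγ1 : γ < 1) {u : ℕ → ℝ} {L C : ℝ}
    (h : ∀ k, |u k - L| ≤ C * γ ^ k) : Tendsto u atTop (𝓝 L) :=
  tendsto_iff_norm_sub_tendsto_zero.2 <| squeeze_zero (fun k => norm_nonneg _) h <| by
    simpa using (tendsto_pow_atTop_nhds_zero_of_lt_one hγ0 hγ1).const_mul C

end DiscountedSums

section MarkovChain

variable {S B A : Type*} [Fintype S] [Fintype B] [Fintype A]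
  {μ₀ : S × B → ℝ} {T : S × B → A → S × B → ℝ} {pol pol₁ pol₂ : S × B → A → ℝ}
  {r : S × B → A → S × B → ℝ} {γ R : ℝ}

def stepReward (μ₀ : S × B → ℝ) (T : S × B → A → S × B → ℝ) (pol : S × B → A → ℝ)
    (r : S × B → A → S × B → ℝ) (t : ℕ) : ℝ :=
  ∑ x, ∑ a, ∑ x', traj μ₀ T pol t x * pol x a * T x a x' * r x a x'

lemma ret_eq_tsum_stepReward :
    ret γ μ₀ T pol r = ∑' t, γ ^ t * stepReward μ₀ T pol r t := rfl

lemma sum_traj_mul_mul_kernel (hT : ∀ x a, IsPmf (T x a)) (hpol : ∀ x, IsPmf (pol x))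
    (t : ℕ) :
    ∑ x, ∑ a, ∑ x', traj μ₀ T pol t x * pol x a * T x a x' = ∑ x, traj μ₀ T pol t x := by
  simp only [← Finset.mul_sum, (hT _ _).2, (hpol _).2, mul_one]

lemma isPmf_traj (hμ₀ : IsPmf μ₀) (hT : ∀ x a, IsPmf (T x a)) (hpol : ∀ x, IsPmf (pol x)) :
    ∀ t, IsPmf (traj μ₀ T pol t)
  | 0 => hμ₀
  | t + 1 => by
    obtain ⟨hnn, hone⟩ := isPmf_traj hμ₀ hT hpol t
    refine ⟨fun x' => Finset.sum_nonneg fun x _ => Finset.sum_nonneg fun a _ =>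
      mul_nonneg (mul_nonneg (hnn x) ((hpol x).1 a)) ((hT x a).1 x'), ?_⟩
    simp only [traj]
    rw [Finset.sum_comm, ← hone, ← sum_traj_mul_mul_kernel hT hpol t]
    exact Finset.sum_congr rfl fun x _ => Finset.sum_comm

lemma occ_nonneg (hγ0 : 0 ≤ γ) (hγ1 : γ ≤ 1) (hμ₀ : IsPmf μ₀) (hT : ∀ x a, IsPmf (T x a))
    (hpol : ∀ x, IsPmf (pol x)) (x : S × B) : 0 ≤ occ γ μ₀ T pol x :=
  mul_nonneg (sub_nonneg.2 hγ1) <| tsum_nonneg fun t =>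
    mul_nonneg (pow_nonneg hγ0 t) ((isPmf_traj hμ₀ hT hpol t).1 x)

lemma occ_pos_of_traj_pos (hγ0 : 0 < γ) (hγ1 : γ < 1) (hμ₀ : IsPmf μ₀)
    (hT : ∀ x a, IsPmf (T x a)) (hpol : ∀ x, IsPmf (pol x)) {t : ℕ} {x : S × B}
    (h : 0 < traj μ₀ T pol t x) : 0 < occ γ μ₀ T pol x := by
  have hnn t := (isPmf_traj hμ₀ hT hpol t).1 x
  have hsum : Summable fun t => γ ^ t * traj μ₀ T pol t x :=
    summable_pow_mul_of_abs_le hγ0.le hγ1 fun t =>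
      (abs_of_nonneg (hnn t)).trans_le ((isPmf_traj hμ₀ hT hpol t).le_one x)
  exact mul_pos (sub_pos.2 hγ1) <| (mul_pos (pow_pos hγ0 t) h).trans_le <|
    hsum.le_tsum t fun u _ => mul_nonneg (pow_nonneg hγ0.le u) (hnn u)

lemma traj_congr (hμ₀ : IsPmf μ₀) (hT : ∀ x a, IsPmf (T x a)) (hpol₂ : ∀ x, IsPmf (pol₂ x))
    {N : ℕ} (hag : ∀ t < N, ∀ x, 0 < traj μ₀ T pol₂ t x → pol₁ x = pol₂ x) :
    ∀ t ≤ N, traj μ₀ T pol₁ t = traj μ₀ T pol₂ t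
  | 0, _ => rfl
  | t + 1, ht => by
    funext x'
    simp only [traj, traj_congr hμ₀ hT hpol₂ hag t (by omega)]
    refine Finset.sum_congr rfl fun x _ => ?_
    rcases ((isPmf_traj hμ₀ hT hpol₂ t).1 x).eq_or_lt with h0 | h0
    · simp [← h0]
    · rw [hag t ht x h0]

lemma stepReward_congr (hμ₀ : IsPmf μ₀) (hT : ∀ x a, IsPmf (T x a))
    (hpol₂ : ∀ x, IsPmf (pol₂ x)) {N : ℕ}
    (hag : ∀ t < N, ∀ x, 0 < traj μ₀ T pol₂ t x → pol₁ x = pol₂ x) {t : ℕ} (ht : t < N) :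
    stepReward μ₀ T pol₁ r t = stepReward μ₀ T pol₂ r t := by
  unfold stepReward
  rw [traj_congr hμ₀ hT hpol₂ hag t ht.le]
  refine Finset.sum_congr rfl fun x _ => ?_
  rcases ((isPmf_traj hμ₀ hT hpol₂ t).1 x).eq_or_lt with h0 | h0
  · simp [← h0]
  · rw [hag t ht x h0]

lemma abs_stepReward_le (hμ₀ : IsPmf μ₀) (hT : ∀ x a, IsPmf (T x a))
    (hpol : ∀ x, IsPmf (pol x)) (hr : ∀ x a x', |r x a x'| ≤ R) (t : ℕ) :
    |stepReward μ₀ T pol r t| ≤ R := by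
  have hw x a x' : 0 ≤ traj μ₀ T pol t x * pol x a * T x a x' :=
    mul_nonneg (mul_nonneg ((isPmf_traj hμ₀ hT hpol t).1 x) ((hpol x).1 a)) ((hT x a).1 x')
  calc |stepReward μ₀ T pol r t|
      ≤ ∑ x, ∑ a, ∑ x', |traj μ₀ T pol t x * pol x a * T x a x' * r x a x'| :=
        (Finset.abs_sum_le_sum_abs _ _).trans <| Finset.sum_le_sum fun x _ =>
          (Finset.abs_sum_le_sum_abs _ _).trans <| Finset.sum_le_sum fun a _ =>
            Finset.abs_sum_le_sum_abs _ _
    _ ≤ ∑ x, ∑ a, ∑ x', traj μ₀ T pol t x * pol x a * T x a x' * R := by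
        refine Finset.sum_le_sum fun x _ => Finset.sum_le_sum fun a _ =>
          Finset.sum_le_sum fun x' _ => ?_
        rw [abs_mul, abs_of_nonneg (hw x a x')]
        exact mul_le_mul_of_nonneg_left (hr x a x') (hw x a x')
    _ = R := by
        simp only [← Finset.sum_mul, sum_traj_mul_mul_kernel hT hpol, (isPmf_traj hμ₀ hT hpol t).2,
          one_mul]

lemma ret_congr (hμ₀ : IsPmf μ₀) (hT : ∀ x a, IsPmf (T x a)) (hpol₂ : ∀ x, IsPmf (pol₂ x))
    (hag : ∀ t x, 0 < traj μ₀ T pol₂ t x → pol₁ x = pol₂ x) :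
    ret γ μ₀ T pol₁ r = ret γ μ₀ T pol₂ r := by
  simp only [ret_eq_tsum_stepReward]
  exact tsum_congr fun t => by
    rw [stepReward_congr hμ₀ hT hpol₂ (N := t + 1) (fun t _ => hag t) t.lt_succ_self]

lemma abs_ret_sub_le (hγ0 : 0 ≤ γ) (hγ1 : γ < 1) (hμ₀ : IsPmf μ₀) (hT : ∀ x a, IsPmf (T x a))
    (hpol₁ : ∀ x, IsPmf (pol₁ x)) (hpol₂ : ∀ x, IsPmf (pol₂ x))
    (hr : ∀ x a x', |r x a x'| ≤ R) {k : ℕ}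
    (hag : ∀ t < k, ∀ x, 0 < traj μ₀ T pol₂ t x → pol₁ x = pol₂ x) :
    |ret γ μ₀ T pol₁ r - ret γ μ₀ T pol₂ r| ≤ 2 * R * γ ^ k / (1 - γ) :=
  abs_tsum_pow_mul_sub_le hγ0 hγ1 (abs_stepReward_le hμ₀ hT hpol₁ hr)
    (abs_stepReward_le hμ₀ hT hpol₂ hr) fun _ ht => stepReward_congr hμ₀ hT hpol₂ hag ht

end MarkovChain

section AIL

variable {S B A : Type*} [Fintype S] [Fintype B] [Fintype A]
  {μ₀ : S × B → ℝ} {T : S × B → A → S × B → ℝ} {γ : ℝ} {πhat : B → A → ℝ}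

lemma statePol_eq_beliefPol_of_traj_pos (hγ0 : 0 < γ) (hγ1 : γ < 1) (hμ₀ : IsPmf μ₀)
    (hT : ∀ x a, IsPmf (T x a)) {πθ : S → A → ℝ} (hπθ : ∀ s, IsPmf (πθ s))
    (hπhat : ∀ b, IsPmf (πhat b))
    (hid : ∑ x : S × B,
        ENNReal.ofReal (occ γ μ₀ T (beliefPol πhat) x) * klDiv (πθ x.1) (πhat x.2) = 0)
    (t : ℕ) (x : S × B) (hx : 0 < traj μ₀ T (beliefPol πhat) t x) :
    statePol πθ x = beliefPol πhat x := by
  have hocc := occ_pos_of_traj_pos hγ0 hγ1 hμ₀ hT (fun x => hπhat x.2) hx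
  have hkl : klDiv (πθ x.1) (πhat x.2) = 0 :=
    (mul_eq_zero.mp (Finset.sum_eq_zero_iff.mp hid x (Finset.mem_univ x))).resolve_left
      (ENNReal.ofReal_pos.2 hocc).ne'
  exact eq_of_klDiv_eq_zero (hπθ x.1) (hπhat x.2) hkl

lemma beliefPol_iterate_eq_of_traj_pos (hγ0 : 0 < γ) (hγ1 : γ < 1) (hμ₀ : IsPmf μ₀)
    (hT : ∀ x a, IsPmf (T x a)) (hπhat : ∀ b, IsPmf (πhat b))
    {κ : ℕ → B → A → ℝ} (hκ : ∀ k b, IsPmf (κ k b))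
    (hiter : ∀ k : ℕ, ∀ b : B,
      0 < ∑ s : S, occ γ μ₀ T (beliefPol (κ k)) (s, b) → κ (k + 1) b = πhat b) :
    ∀ k, ∀ t < k, ∀ x, 0 < traj μ₀ T (beliefPol πhat) t x →
      beliefPol (κ k) x = beliefPol πhat x
  | 0, t, ht, _, _ => absurd ht t.not_lt_zero
  | k + 1, t, ht, x, hx => by
    have htraj := traj_congr hμ₀ hT (fun x => hπhat x.2)
      (beliefPol_iterate_eq_of_traj_pos hγ0 hγ1 hμ₀ hT hπhat hκ hiter k) t (by omega)
    have hocc : 0 < occ γ μ₀ T (beliefPol (κ k)) (x.1, x.2) :=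
      occ_pos_of_traj_pos hγ0 hγ1 hμ₀ hT (fun x => hκ k x.2) (htraj ▸ hx)
    exact hiter k x.2 <| Finset.sum_pos'
      (fun s _ => occ_nonneg hγ0.le hγ1.le hμ₀ hT (fun x => hκ k x.2) _)
      ⟨x.1, Finset.mem_univ _, hocc⟩

end AIL

theorem convergence_of_ail_general
    {S B A : Type*} [Fintype S] [Fintype B] [Fintype A]
    (μ₀ : S × B → ℝ) (hμ₀ : IsPmf μ₀)
    (T : S × B → A → S × B → ℝ) (hT : ∀ x a, IsPmf (T x a))
    (γ : ℝ) (hγ0 : 0 < γ) (hγ1 : γ < 1)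
    (r : S × B → A → S × B → ℝ)
    (πθ : S → A → ℝ) (hπθ : ∀ s, IsPmf (πθ s))
    (πhat : B → A → ℝ) (hπhat : ∀ b, IsPmf (πhat b))
    (hid : ∑ x : S × B,
        ENNReal.ofReal (occ γ μ₀ T (beliefPol πhat) x) * klDiv (πθ x.1) (πhat x.2) = 0)
    (hopt : ∀ κ : B → A → ℝ, (∀ b, IsPmf (κ b)) →
        ret γ μ₀ T (beliefPol κ) r ≤ ret γ μ₀ T (statePol πθ) r)
    (κ : ℕ → B → A → ℝ) (hκ : ∀ k b, IsPmf (κ k b))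
    (hiter : ∀ k : ℕ, ∀ b : B,
      0 < ∑ s : S, occ γ μ₀ T (beliefPol (κ k)) (s, b) → κ (k + 1) b = πhat b)
    (R : ℝ) (hR : R = ⨆ x : S × B, ⨆ a : A, ⨆ x' : S × B, |r x a x'|) :
    (∀ k : ℕ,
      |ret γ μ₀ T (beliefPol (κ k)) r - ret γ μ₀ T (beliefPol πhat) r|
        ≤ 2 * R * γ ^ k / (1 - γ)) ∧
    Filter.Tendsto (fun k => ret γ μ₀ T (beliefPol (κ k)) r) Filter.atTop
      (nhds (⨆ κ' : {κ' : B → A → ℝ // ∀ b, IsPmf (κ' b)},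
        ret γ μ₀ T (beliefPol κ'.1) r)) := by
  have hr : ∀ x a x', |r x a x'| ≤ R := hR ▸ abs_le_iSup_iSup_iSup r
  have hπhat_pair : ∀ x : S × B, IsPmf (beliefPol πhat x) := fun x => hπhat x.2
  have hbound k := abs_ret_sub_le hγ0.le hγ1 hμ₀ hT (fun x => hκ k x.2) hπhat_pair hr
    (beliefPol_iterate_eq_of_traj_pos hγ0 hγ1 hμ₀ hT hπhat hκ hiter k)
  have hJ : ret γ μ₀ T (statePol πθ) r = ret γ μ₀ T (beliefPol πhat) r :=
    ret_congr hμ₀ hT hπhat_pair (statePol_eq_beliefPol_of_traj_pos hγ0 hγ1 hμ₀ hT hπθ hπhat hid)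
  have hle (κ' : {κ' : B → A → ℝ // ∀ b, IsPmf (κ' b)}) :
      ret γ μ₀ T (beliefPol κ'.1) r ≤ ret γ μ₀ T (beliefPol πhat) r :=
    (hopt κ'.1 κ'.2).trans hJ.le
  have : Nonempty {κ' : B → A → ℝ // ∀ b, IsPmf (κ' b)} := ⟨⟨πhat, hπhat⟩⟩
  have hsup : (⨆ κ' : {κ' : B → A → ℝ // ∀ b, IsPmf (κ' b)}, ret γ μ₀ T (beliefPol κ'.1) r)
      = ret γ μ₀ T (beliefPol πhat) r :=
    le_antisymm (ciSup_le hle)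
      (le_ciSup_of_le ⟨_, Set.forall_mem_range.2 hle⟩ ⟨πhat, hπhat⟩ le_rfl)
  refine ⟨hbound, hsup ▸ tendsto_of_abs_sub_le_mul_pow (C := 2 * R / (1 - γ)) hγ0.le hγ1
    fun k => ?_⟩
  rw [← mul_div_right_comm]
  exact hbound k

/-- Theorem 2 (Convergence of AIL): under identifiability of `{π_{θ*}, π̂}` and
optimality of `π_{θ*}`, the returns of the AIL iterates `κ_k` satisfy
`|J(κ_k) − J(π̂)| ≤ 2·R·γ^k/(1−γ)` and converge to the optimal partially observed
return `⨆_κ J(κ)`. -/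
theorem convergence_of_ail
    {S B A : Type*} [Fintype S] [Fintype B] [Fintype A]
    [Nonempty S] [Nonempty B] [Nonempty A]
    (μ₀ : S × B → ℝ) (hμ₀ : IsPmf μ₀)
    (T : S × B → A → S × B → ℝ) (hT : ∀ x a, IsPmf (T x a))
    (γ : ℝ) (hγ0 : 0 < γ) (hγ1 : γ < 1)
    (r : S × B → A → S × B → ℝ)
    (πθ : S → A → ℝ) (hπθ : ∀ s, IsPmf (πθ s))
    (πhat : B → A → ℝ) (hπhat : ∀ b, IsPmf (πhat b))
    (hid : ∑ x : S × B,
        ENNReal.ofReal (occ γ μ₀ T (beliefPol πhat) x) * klDiv (πθ x.1) (πhat x.2) = 0)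
    (hopt : ∀ κ : B → A → ℝ, (∀ b, IsPmf (κ b)) →
        ret γ μ₀ T (beliefPol κ) r ≤ ret γ μ₀ T (statePol πθ) r)
    (κ : ℕ → B → A → ℝ) (hκ : ∀ k b, IsPmf (κ k b))
    (hiter : ∀ k : ℕ, ∀ b : B,
      0 < ∑ s : S, occ γ μ₀ T (beliefPol (κ k)) (s, b) → κ (k + 1) b = πhat b)
    (R : ℝ) (hR : R = ⨆ x : S × B, ⨆ a : A, ⨆ x' : S × B, |r x a x'|) :
    (∀ k : ℕ,
      |ret γ μ₀ T (beliefPol (κ k)) r - ret γ μ₀ T (beliefPol πhat) r|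
        ≤ 2 * R * γ ^ k / (1 - γ)) ∧
    Filter.Tendsto (fun k => ret γ μ₀ T (beliefPol (κ k)) r) Filter.atTop
      (nhds (⨆ κ' : {κ' : B → A → ℝ // ∀ b, IsPmf (κ' b)},
        ret γ μ₀ T (beliefPol κ'.1) r)) :=
  convergence_of_ail_general μ₀ hμ₀ T hT γ hγ0 hγ1 r πθ hπθ πhat hπhat hid hopt κ hκ hiter R hR
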